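/- arXiv:2509.23740 — 5 statements merged into one kernel-verified Lean document; each statement's English description precedes it below -/
import Mathlib

section
/- Let g and g' be simple Lie algebras over a field of characteristic zero, and let h be a Lie subalgebra of the product g × g' of codimension 1 (as a vector subspace). Then h contains g × {0} or h contains {0} × g'; equivalently, h = n × g' for some codimension-1 subalgebra n of g, or h = g × n' for some codimension-1 subalgebra n' of g'. -/
/- Product Lie ring / Lie algebra structure on `L × L'` (componentwise bracket). -/

namespace Stmt0

variable {K : Type*} {L L' : Type*}

instance prodBracket [LieRing L] [LieRing L'] : Bracket (L × L') (L × L') :=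
  ⟨fun x y => (⁅x.1, y.1⁆, ⁅x.2, y.2⁆)⟩

instance prodLieRing [LieRing L] [LieRing L'] : LieRing (L × L') where
  add_lie x y z := Prod.ext (add_lie x.1 y.1 z.1) (add_lie x.2 y.2 z.2)
  lie_add x y z := Prod.ext (lie_add x.1 y.1 z.1) (lie_add x.2 y.2 z.2)
  lie_self x := Prod.ext (lie_self x.1) (lie_self x.2)
  leibniz_lie x y z := Prod.ext (leibniz_lie x.1 y.1 z.1) (leibniz_lie x.2 y.2 z.2)

instance prodLieAlgebra [Field K] [LieRing L] [LieRing L'] [LieAlgebra K L]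
    [LieAlgebra K L'] : LieAlgebra K (L × L') where
  lie_smul t x y := Prod.ext (lie_smul t x.1 y.1) (lie_smul t x.2 y.2)

lemma two_le_finrank_of_simple [Field K] [LieRing L] [LieAlgebra K L]
    [FiniteDimensional K L] [LieAlgebra.IsSimple K L] :
    2 ≤ Module.finrank K L := by
  by_contra hlt
  push_neg at hlt
  have h1 : Module.finrank K L ≤ 1 := by omega
  obtain ⟨v, hv⟩ := finrank_le_one_iff.mp h1
  have : IsLieAbelian L := by
    constructor
    intro x y
    obtain ⟨a, ha⟩ := hv x
    obtain ⟨b, hb⟩ := hv y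
    rw [← ha, ← hb, smul_lie, lie_smul, lie_self, smul_zero, smul_zero]
  exact LieAlgebra.IsSimple.non_abelian K (L := L) this

lemma aux_main [Field K]
    [LieRing L] [LieAlgebra K L] [LieRing L'] [LieAlgebra K L']
    [FiniteDimensional K L] [FiniteDimensional K L']
    [LieAlgebra.IsSimple K L]
    (h : LieSubalgebra K (L × L'))
    (hcodim : Module.finrank K h.toSubmodule + 1 = Module.finrank K (L × L'))
    (hsurj : ∀ x : L, ∃ y : L', (x, y) ∈ h) :
    ∀ x : L, (x, (0 : L')) ∈ h := by
  set N : LieIdeal K L :=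
    { h.toSubmodule.comap (LinearMap.inl K L L') with
      lie_mem := by
        intro x z hz
        obtain ⟨y, hy⟩ := hsurj x
        have hz' : ((z, 0) : L × L') ∈ h := hz
        have hb := h.lie_mem hy hz'
        have heq : ⁅((x, y) : L × L'), ((z, 0) : L × L')⁆ = ((⁅x, z⁆, 0) : L × L') := by
          show (⁅x, z⁆, ⁅y, (0 : L')⁆) = (⁅x, z⁆, (0 : L'))
          rw [lie_zero]
        rw [heq] at hb
        exact hb } with hN
  rcases LieAlgebra.IsSimple.eq_bot_or_eq_top N with hbot | htop
  · -- contradiction via dimensions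
    exfalso
    set f : h.toSubmodule →ₗ[K] L' := (LinearMap.snd K L L').comp h.toSubmodule.subtype with hf
    have hinj : Function.Injective f := by
      rw [← LinearMap.ker_eq_bot]
      ext p
      simp only [Submodule.mem_bot, LinearMap.mem_ker]
      constructor
      · intro hp
        have hp2 : (p : L × L').2 = 0 := hp
        have hmem : ((p : L × L').1, (0 : L')) ∈ h := by
          have := p.2
          rwa [show ((p : L × L').1, (0 : L')) = (p : L × L') from by
            rw [← hp2]] 
        have : (p : L × L').1 ∈ N := hmem
        rw [hbot] at this
        have h1 : (p : L × L').1 = 0 := this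
        exact Subtype.ext (Prod.ext (by simpa using h1) (by simpa using hp2))
      · intro hp; rw [hp]; simp [hf]
    have hle : Module.finrank K h.toSubmodule ≤ Module.finrank K L' :=
      LinearMap.finrank_le_finrank_of_injective hinj
    have h2 : 2 ≤ Module.finrank K L := two_le_finrank_of_simple
    rw [Module.finrank_prod] at hcodim
    omega
  · intro x
    have : x ∈ N := by rw [htop]; trivial
    exact this





def swapHom [Field K] [LieRing L] [LieAlgebra K L] [LieRing L'] [LieAlgebra K L'] :
    (L' × L) →ₗ⁅K⁆ (L × L') :=
  { (LinearMap.snd K L' L).prod (LinearMap.fst K L' L) with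
    map_lie' := fun {_ _} => rfl }

lemma surj_dichotomy [Field K]
    [LieRing L] [LieAlgebra K L] [LieRing L'] [LieAlgebra K L']
    [FiniteDimensional K L] [FiniteDimensional K L']
    (h : LieSubalgebra K (L × L'))
    (hcodim : Module.finrank K h.toSubmodule + 1 = Module.finrank K (L × L')) :
    (∀ x : L, ∃ y : L', (x, y) ∈ h) ∨ (∀ y : L', ∃ x : L, (x, y) ∈ h) := by
  by_contra hc
  push_neg at hc
  obtain ⟨⟨x0, hx0⟩, ⟨y0, hy0⟩⟩ := hc
  set A : Submodule K L := h.toSubmodule.map (LinearMap.fst K L L') with hA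
  set B : Submodule K L' := h.toSubmodule.map (LinearMap.snd K L L') with hB
  have hAne : A ≠ ⊤ := by
    intro htop
    have : x0 ∈ A := by rw [htop]; trivial
    obtain ⟨p, hp, hp1⟩ := this
    exact hx0 p.2 (by rwa [show ((x0, p.2) : L × L') = p from Prod.ext hp1.symm rfl])
  have hBne : B ≠ ⊤ := by
    intro htop
    have : y0 ∈ B := by rw [htop]; trivial
    obtain ⟨p, hp, hp1⟩ := this
    exact hy0 p.1 (by rwa [show ((p.1, y0) : L × L') = p from Prod.ext rfl hp1.symm])
  have hAlt : Module.finrank K A < Module.finrank K L :=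
    Submodule.finrank_lt hAne
  have hBlt : Module.finrank K B < Module.finrank K L' :=
    Submodule.finrank_lt hBne
  set f : h.toSubmodule →ₗ[K] L := (LinearMap.fst K L L').comp h.toSubmodule.subtype with hf
  have hrange : LinearMap.range f = A := by
    rw [hf, LinearMap.range_comp, Submodule.range_subtype, hA]
  -- the kernel of f embeds into B
  have hker : Module.finrank K (LinearMap.ker f) ≤ Module.finrank K B := by
    have hmem : ∀ q : LinearMap.ker f, ((q : h.toSubmodule) : L × L').2 ∈ B := by
      intro q
      exact ⟨((q : h.toSubmodule) : L × L'), (q : h.toSubmodule).2, rfl⟩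
    set g : LinearMap.ker f →ₗ[K] B :=
      LinearMap.codRestrict B
        ((LinearMap.snd K L L').comp (h.toSubmodule.subtype.comp (LinearMap.ker f).subtype))
        hmem with hg
    have hginj : Function.Injective g := by
      intro q r hqr
      have h2 : ((q : h.toSubmodule) : L × L').2 = ((r : h.toSubmodule) : L × L').2 :=
        congrArg Subtype.val hqr
      have h1 : ((q : h.toSubmodule) : L × L').1 = ((r : h.toSubmodule) : L × L').1 := by
        have hq : f (q : h.toSubmodule) = 0 := q.2
        have hr : f (r : h.toSubmodule) = 0 := r.2
        have hq0 : ((q : h.toSubmodule) : L × L').1 = 0 := hq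
        have hr0 : ((r : h.toSubmodule) : L × L').1 = 0 := hr
        rw [hq0, hr0]
      exact Subtype.ext (Subtype.ext (Prod.ext h1 h2))
    exact LinearMap.finrank_le_finrank_of_injective hginj
  have hrn := LinearMap.finrank_range_add_finrank_ker f
  rw [hrange] at hrn
  rw [Module.finrank_prod] at hcodim
  omega



/-- **Codimension-one subalgebras of a product of simple Lie algebras.**
If `g` and `g'` are finite-dimensional simple Lie algebras over a field of
characteristic zero and `h` is a Lie subalgebra of `g × g'` whose underlying
vector subspace has codimension one, then `h` contains `g × {0}` or `{0} × g'`. -/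
theorem codim_one_subalgebra_of_prod_simple
    [Field K] [CharZero K]
    [LieRing L] [LieAlgebra K L] [LieRing L'] [LieAlgebra K L']
    [FiniteDimensional K L] [FiniteDimensional K L']
    [LieAlgebra.IsSimple K L] [LieAlgebra.IsSimple K L']
    (h : LieSubalgebra K (L × L'))
    (hcodim : Module.finrank K h.toSubmodule + 1 = Module.finrank K (L × L')) :
    (∀ x : L, ((x, (0 : L')) ∈ h)) ∨ (∀ y : L', (((0 : L), y) ∈ h)) := by
  rcases surj_dichotomy h hcodim with hs | hs
  · exact Or.inl (aux_main h hcodim hs)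
  · right
    set h' : LieSubalgebra K (L' × L) := h.comap swapHom with hh'
    have hsub : h'.toSubmodule = h.toSubmodule.comap
        ((LinearEquiv.prodComm K L' L : (L' × L) ≃ₗ[K] (L × L')) :
          (L' × L) →ₗ[K] (L × L')) := by
      ext p
      exact Iff.rfl
    have hfin : Module.finrank K h'.toSubmodule = Module.finrank K h.toSubmodule := by
      rw [hsub, Submodule.comap_equiv_eq_map_symm]
      exact LinearEquiv.finrank_map_eq _ _
    have hcodim' : Module.finrank K h'.toSubmodule + 1 = Module.finrank K (L' × L) := by
      rw [hfin, Module.finrank_prod]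
      rw [Module.finrank_prod] at hcodim
      omega
    have hsurj' : ∀ y : L', ∃ x : L, (y, x) ∈ h' := fun y => (hs y).imp fun _ hx => hx
    have hmain := aux_main h' hcodim' hsurj'
    intro y
    exact hmain y


end Stmt0
end

section
/- Let N ≥ 1, let Ω ⊆ ℂ^N be a complete Reinhardt domain, and let f : Ω → ℂ be holomorphic and nowhere vanishing. Suppose that for each θ = (θ₁,…,θ_N) ∈ ℝ^N there exists λ_θ ∈ ℂ \ {0} such that f(e^{iθ₁} z₁, …, e^{iθ_N} z_N) · e^{i(θ₁+⋯+θ_N)} = λ_θ · f(z₁,…,z_N) for all z ∈ Ω. Then f is constant. -/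
open Complex Metric

/-- If `Ω ⊆ ℂ^N` is a complete Reinhardt domain, `f` is holomorphic and nowhere
vanishing on `Ω`, and the holomorphic volume form `f dz₁∧⋯∧dz_N` is preserved up to
nonzero constant multiples by all torus rotations
`(z₁,…,z_N) ↦ (e^{iθ₁}z₁,…,e^{iθ_N}z_N)`, then `f` is constant. -/
theorem torus_invariant_volume_const (N : ℕ) (hN : 1 ≤ N) (Ω : Set (Fin N → ℂ))
    (hopen : IsOpen Ω)
    (hReinhardt : ∀ z ∈ Ω, ∀ w : Fin N → ℂ, (∀ j, ‖w j‖ ≤ ‖z j‖) → w ∈ Ω)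
    (f : (Fin N → ℂ) → ℂ)
    (hf : DifferentiableOn ℂ f Ω)
    (hne : ∀ z ∈ Ω, f z ≠ 0)
    (hrot : ∀ θ : Fin N → ℝ, ∃ lam : ℂ, lam ≠ 0 ∧ ∀ z ∈ Ω,
      f (fun j => Complex.exp (θ j * Complex.I) * z j) *
        Complex.exp ((∑ j, (θ j : ℂ)) * Complex.I) = lam * f z) :
    ∀ z ∈ Ω, ∀ w ∈ Ω, f z = f w := by
  -- Step 1: the multiplier is exactly `exp(i∑θ)`, so `f` is invariant under rotations.
  have hinv : ∀ (θ : Fin N → ℝ), ∀ z ∈ Ω,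
      f (fun j => Complex.exp (θ j * Complex.I) * z j) = f z := by
    intro θ z hz
    obtain ⟨lam, hlam0, hlam⟩ := hrot θ
    have h0 : (fun _ => (0:ℂ)) ∈ Ω := hReinhardt z hz _ (by intro j; simp)
    have hE : Complex.exp ((∑ j, (θ j : ℂ)) * Complex.I) ≠ 0 := Complex.exp_ne_zero _
    have hf0 : f (fun _ => (0:ℂ)) ≠ 0 := hne _ h0
    have h00 := hlam _ h0
    simp only [mul_zero] at h00
    have hlamE : lam = Complex.exp ((∑ j, (θ j : ℂ)) * Complex.I) := by
      have h00' : Complex.exp ((∑ j, (θ j : ℂ)) * Complex.I) * f (fun _ => (0:ℂ))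
          = lam * f (fun _ => (0:ℂ)) := by rw [mul_comm]; exact h00
      exact (mul_right_cancel₀ hf0 h00').symm
    have hz' := hlam z hz
    rw [hlamE] at hz'
    have hz'' : f (fun j => Complex.exp (θ j * Complex.I) * z j)
          * Complex.exp ((∑ j, (θ j : ℂ)) * Complex.I)
        = f z * Complex.exp ((∑ j, (θ j : ℂ)) * Complex.I) := by
      rw [hz']; ring
    exact mul_right_cancel₀ hE hz''
  -- Step 2: every value equals the value at the origin.
  have key : ∀ u ∈ Ω, f u = f (fun _ => (0:ℂ)) := by
    intro u hu
    set L : ℂ → (Fin N → ℂ) := fun ζ => fun j => ζ * u j with hL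
    have hLdiff : Differentiable ℂ L :=
      differentiable_pi.mpr fun j => differentiable_id.mul_const _
    set S : Set ℂ := L ⁻¹' Ω with hS
    have hSopen : IsOpen S := hopen.preimage hLdiff.continuous
    have hballS : closedBall (0:ℂ) 1 ⊆ S := by
      intro ζ hζ
      refine hReinhardt u hu _ (fun j => ?_)
      simp only [L, norm_mul]
      calc ‖ζ‖ * ‖u j‖ ≤ 1 * ‖u j‖ := by
            gcongr; simpa [dist_zero_right] using hζ
        _ = ‖u j‖ := one_mul _
    obtain ⟨δ, hδ, hthick⟩ :=
      (isCompact_closedBall (0:ℂ) 1).exists_thickening_subset_open hSopen hballS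
    have hballR : ball (0:ℂ) (δ + 1) ⊆ S := by
      rw [← thickening_closedBall hδ zero_le_one (0:ℂ)]; exact hthick
    set φ : ℂ → ℂ := fun ζ => f (L ζ) with hφ
    have hφdiff : DifferentiableOn ℂ φ S :=
      hf.comp hLdiff.differentiableOn (fun x hx => hx)
    have hφrot : ∀ θ : ℝ, ∀ ζ ∈ S, φ (Complex.exp (θ * Complex.I) * ζ) = φ ζ := by
      intro θ ζ hζ
      have h := hinv (fun _ => θ) (L ζ) hζ
      simpa [φ, L, mul_assoc] using h
    have hS0 : (0:ℂ) ∈ S := hballS (mem_closedBall_self zero_le_one)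
    -- derivative of φ vanishes on the ball
    have hderiv : ∀ ζ ∈ ball (0:ℂ) (δ + 1), deriv φ ζ = 0 := by
      intro ζ hζ
      rcases eq_or_ne ζ 0 with rfl | hζ0
      · -- φ is even near 0, so its derivative at 0 vanishes
        have heq : (fun x => φ (-x)) =ᶠ[nhds (0:ℂ)] φ := by
          filter_upwards [hSopen.mem_nhds hS0] with x hx
          have h := hφrot Real.pi x hx
          rwa [Complex.exp_pi_mul_I, neg_one_mul] at h
        have h1 : deriv (fun x => φ (-x)) 0 = deriv φ 0 := heq.deriv_eq
        rw [deriv_comp_neg, neg_zero] at h1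
        linear_combination (-1/2 : ℂ) * h1
      · have hζS : ζ ∈ S := hballR hζ
        have hφat : DifferentiableAt ℂ φ ζ :=
          hφdiff.differentiableAt (hSopen.mem_nhds hζS)
        have hinner : HasDerivAt (fun w : ℂ => Complex.exp (w * Complex.I) * ζ)
            (Complex.I * ζ) 0 := by
          have h1 : HasDerivAt (fun w : ℂ => Complex.exp (w * Complex.I))
              (Complex.exp ((0:ℂ) * Complex.I) * Complex.I) 0 := by
            simpa using ((hasDerivAt_id (0:ℂ)).mul_const Complex.I).cexp
          simpa [Complex.exp_zero] using h1.mul_const ζ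
        have hφ' : HasDerivAt φ (deriv φ ζ)
            ((fun w : ℂ => Complex.exp (w * Complex.I) * ζ) 0) := by
          simpa [Complex.exp_zero] using hφat.hasDerivAt
        have hcomp := hφ'.comp 0 hinner
        have hg : HasDerivAt (fun θ : ℝ => φ (Complex.exp ((θ:ℂ) * Complex.I) * ζ))
            (deriv φ ζ * (Complex.I * ζ)) 0 := by
          have := hcomp.comp_ofReal (z := 0)
          simpa [Function.comp] using this
        have hgconst : (fun θ : ℝ => φ (Complex.exp ((θ:ℂ) * Complex.I) * ζ))
            = fun _ => φ ζ := by
          funext θ; exact hφrot θ ζ hζS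
        rw [hgconst] at hg
        have hz0 : deriv φ ζ * (Complex.I * ζ) = 0 := hg.unique (hasDerivAt_const _ _)
        rcases mul_eq_zero.mp hz0 with h | h
        · exact h
        · exact absurd h (mul_ne_zero Complex.I_ne_zero hζ0)
    -- φ is constant on the ball
    have hfd : ∀ ζ ∈ ball (0:ℂ) (δ + 1),
        fderivWithin ℂ φ (ball (0:ℂ) (δ + 1)) ζ = 0 := by
      intro ζ hζ
      rw [fderivWithin_of_isOpen isOpen_ball hζ]
      have hd : HasDerivAt φ 0 ζ := by
        have h := (hφdiff.differentiableAt (hSopen.mem_nhds (hballR hζ))).hasDerivAt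
        rwa [hderiv ζ hζ] at h
      rw [hd.hasFDerivAt.fderiv]
      ext x
      simp
    have h0mem : (0:ℂ) ∈ ball (0:ℂ) (δ + 1) := by
      simp only [mem_ball, dist_zero_right, norm_zero]; linarith
    have h1mem : (1:ℂ) ∈ ball (0:ℂ) (δ + 1) := by
      simp only [mem_ball, dist_zero_right, norm_one]; linarith
    have hconst := (convex_ball (0:ℂ) (δ + 1)).is_const_of_fderivWithin_eq_zero
      (hφdiff.mono hballR) hfd h1mem h0mem
    simpa [φ, L] using hconst
  intro z hz w hw
  rw [key z hz, key w hw]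
end

section
/- There is no nowhere-vanishing holomorphic function f on ℍ × ℍ (where ℍ = {ζ ∈ ℂ : Im ζ > 0}) with the following two properties: (i) for every b ∈ ℝ there is λ_b ∈ ℂ \ {0} with f(z, w+b) = λ_b f(z,w) for all (z,w); (ii) there is μ ∈ ℂ \ {0} with f(z, −1/w) · (1/w²) = μ f(z,w) for all (z,w). In other words, no holomorphic symplectic form f(z,w) dz∧dw on ℍ×ℍ is invariant up to nonzero constant multiples under all translations (z,w) ↦ (z, w+b), b ∈ ℝ, together with the inversion (z,w) ↦ (z, −1/w). -/
open Complex

/-- The open upper half-plane `ℍ ⊆ ℂ`. -/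
def UHP : Set ℂ := {z | 0 < z.im}

/-- There is no nowhere-vanishing holomorphic function `f` on `ℍ × ℍ` such that the
holomorphic 2-form `f(z,w) dz∧dw` is invariant up to nonzero constant multiples under
all the translations `(z,w) ↦ (z, w+b)`, `b ∈ ℝ`, and under the inversion
`(z,w) ↦ (z, −1/w)` (whose pullback of `f dz∧dw` is `f(z,−1/w)·(1/w²) dz∧dw`). -/
theorem no_invariant_symplectic_form_on_H2 :
    ¬ ∃ f : ℂ × ℂ → ℂ,
      DifferentiableOn ℂ f (UHP ×ˢ UHP) ∧
      (∀ p ∈ UHP ×ˢ UHP, f p ≠ 0) ∧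
      (∀ b : ℝ, ∃ lam : ℂ, lam ≠ 0 ∧ ∀ p ∈ UHP ×ˢ UHP, f (p.1, p.2 + (b : ℂ)) = lam * f p) ∧
      (∃ mu : ℂ, mu ≠ 0 ∧ ∀ p ∈ UHP ×ˢ UHP, f (p.1, -1 / p.2) * (1 / p.2 ^ 2) = mu * f p) := by
  rintro ⟨f, -, hne, htrans, μ, hμ0, hinv⟩
  have hI : (I : ℂ) ∈ UHP := by simp [UHP]
  have hII : ((I, I) : ℂ × ℂ) ∈ UHP ×ˢ UHP := ⟨hI, hI⟩
  have hfii : f (I, I) ≠ 0 := hne _ hII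
  -- Step 1 : μ = -1, from the fixed point w = i of w ↦ -1/w.
  have hinvI : (-1 : ℂ) / I = I := by
    rw [div_eq_iff I_ne_zero]
    simp [Complex.I_mul_I]
  have h1 : f (I, -1 / I) * (1 / I ^ 2) = μ * f (I, I) := hinv (I, I) hII
  rw [hinvI, I_sq] at h1
  have hμ : μ = -1 := by
    have h1' : μ * f (I, I) = (-1 : ℂ) * f (I, I) := by
      rw [← h1]; ring
    exact mul_right_cancel₀ hfii h1'
  -- Step 2 : for |b| < 2, the multiplier of the translation by b is pinned down by
  -- the fixed point (−b + i√(4−b²))/2 of w ↦ −1/(w+b).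
  have key : ∀ (b t : ℝ) (lam : ℂ), 0 < t → (t : ℂ) ^ 2 = 4 - (b : ℂ) ^ 2 →
      (∀ p ∈ UHP ×ˢ UHP, f (p.1, p.2 + (b : ℂ)) = lam * f p) →
      lam * (((b : ℂ) + (t : ℂ) * I) / 2) ^ 2 = -1 := by
    intro b t lam ht ht2 hlam
    set w : ℂ := (-(b : ℂ) + (t : ℂ) * I) / 2 with hw
    set W : ℂ := ((b : ℂ) + (t : ℂ) * I) / 2 with hW
    have hwim : 0 < w.im := by
      simp only [hw]
      simp [Complex.div_im, Complex.add_im, Complex.mul_im]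
      positivity
    have hWim : 0 < W.im := by
      simp only [hW]
      simp [Complex.div_im, Complex.add_im, Complex.mul_im]
      positivity
    have hW0 : W ≠ 0 := by
      intro h
      rw [h] at hWim
      simp at hWim
    have hfix : -1 / W = w := by
      rw [div_eq_iff hW0, hw, hW]
      linear_combination (1 / 4 : ℂ) * ht2 - ((t : ℂ) ^ 2 / 4) * Complex.I_sq
    have h2 : f (I, w + (b : ℂ)) = lam * f (I, w) := hlam (I, w) ⟨hI, hwim⟩
    have hwW : w + (b : ℂ) = W := by rw [hw, hW]; ring
    rw [hwW] at h2
    have h3 : f (I, -1 / W) * (1 / W ^ 2) = μ * f (I, W) := hinv (I, W) ⟨hI, hWim⟩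
    rw [hfix, h2, hμ] at h3
    -- h3 : f (I, w) * (1 / W ^ 2) = -1 * (lam * f (I, w))
    have hfw : f (I, w) ≠ 0 := hne _ ⟨hI, hwim⟩
    have hW2 : (W : ℂ) ^ 2 ≠ 0 := pow_ne_zero _ hW0
    have h4 : lam * W ^ 2 * f (I, w) = (-1 : ℂ) * f (I, w) := by
      field_simp at h3
      linear_combination f (I, w) * h3
    exact mul_right_cancel₀ hfw h4
  -- Step 3 : instantiate at b = √3, b = −1, b = √3 − 1.
  set s : ℝ := Real.sqrt 3 with hsdef
  have hs2 : s ^ 2 = 3 := Real.sq_sqrt (by norm_num)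
  have hs0 : 0 ≤ s := Real.sqrt_nonneg 3
  have hs1 : 1 < s := by nlinarith
  have hS2 : (s : ℂ) ^ 2 = 3 := by exact_mod_cast congrArg (fun x : ℝ => (x : ℂ)) hs2
  set t : ℝ := Real.sqrt (2 * s) with htdef
  have ht0 : 0 < t := Real.sqrt_pos.mpr (by linarith)
  have ht2 : t ^ 2 = 2 * s := Real.sq_sqrt (by linarith)
  have hT2 : (t : ℂ) ^ 2 = 2 * (s : ℂ) := by exact_mod_cast congrArg (fun x : ℝ => (x : ℂ)) ht2
  obtain ⟨lamA, -, hA⟩ := htrans s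
  obtain ⟨lamB, -, hB⟩ := htrans (-1)
  obtain ⟨lamC, -, hC⟩ := htrans (s - 1)
  have EA := key s 1 lamA one_pos (by push_cast; linear_combination hS2) hA
  have EB := key (-1) s lamB (by linarith) (by push_cast; linear_combination hS2) hB
  have EC := key (s - 1) t lamC ht0 (by push_cast; linear_combination hT2 + hS2) hC
  -- Step 4 : the multiplier composition law  λ_{√3−1} = λ_{√3} · λ_{−1}.
  have him2 : (0 : ℝ) < (I + ((-1 : ℝ) : ℂ)).im := by simp
  have e1 : f (I, I + ((s - 1 : ℝ) : ℂ)) = lamC * f (I, I) := hC (I, I) hII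
  have e2 : f (I, I + ((-1 : ℝ) : ℂ)) = lamB * f (I, I) := hB (I, I) hII
  have e3 : f (I, (I + ((-1 : ℝ) : ℂ)) + ((s : ℝ) : ℂ)) = lamA * f (I, I + ((-1 : ℝ) : ℂ)) :=
    hA (I, I + ((-1 : ℝ) : ℂ)) ⟨hI, him2⟩
  have ept : (I + ((-1 : ℝ) : ℂ)) + ((s : ℝ) : ℂ) = I + ((s - 1 : ℝ) : ℂ) := by
    push_cast; ring
  rw [ept, e1, e2] at e3
  have hlc : lamC = lamA * lamB := by
    have h5 : lamC * f (I, I) = (lamA * lamB) * f (I, I) := by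
      rw [e3]; ring
    exact mul_right_cancel₀ hfii h5
  -- Step 5 : derive the algebraic contradiction.
  push_cast at EA EB EC
  rw [hlc] at EC
  have hAB : lamA * lamB * ((((s : ℂ) + 1 * I) / 2) ^ 2 * (((-1 : ℂ) + (s : ℂ) * I) / 2) ^ 2) = 1 := by
    linear_combination ((((-1 : ℂ) + (s : ℂ) * I) / 2) ^ 2 * lamB) * EA - EB
  have hfin : 4 * ((s : ℂ) - 1 + (t : ℂ) * I) ^ 2 + (((s : ℂ) + I) * (-1 + (s : ℂ) * I)) ^ 2 = 0 := by
    linear_combination (-16 * (((s : ℂ) - 1 + (t : ℂ) * I) / 2) ^ 2) * hAB +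
      (16 * ((((s : ℂ) + 1 * I) / 2) ^ 2 * (((-1 : ℂ) + (s : ℂ) * I) / 2) ^ 2)) * EC
  obtain ⟨hre, him⟩ := Complex.ext_iff.mp hfin
  simp only [Complex.add_re, Complex.add_im, Complex.mul_re, Complex.mul_im, Complex.sub_re,
    Complex.sub_im, Complex.one_re, Complex.one_im, Complex.I_re, Complex.I_im,
    Complex.ofReal_re, Complex.ofReal_im, Complex.neg_re, Complex.neg_im, Complex.zero_re,
    Complex.zero_im, Complex.re_ofNat, Complex.im_ofNat, pow_two] at hre
  ring_nf at hre
  nlinarith [hre, hs2, ht2, hs1, ht0, sq_nonneg (s - 3/2), sq_nonneg (2*s - 3)]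
end

section
/- Let z, w : 𝔻 → 𝔻 be holomorphic self-maps of the unit disc, and let y : 𝔻 → ℂ be holomorphic with y'(ζ) = z(ζ)·w'(ζ) for all ζ ∈ 𝔻. Then for every ζ ∈ 𝔻, |y(ζ) − y(0)| ≤ artanh(|ζ|) = (1/2) log((1+|ζ|)/(1−|ζ|)). -/
open Metric Complex Set

noncomputable def moeb (a : ℂ) : ℂ → ℂ := fun ζ => (ζ + a) / (1 + (starRingEnd ℂ) a * ζ)

lemma moeb_den_ne {a ζ : ℂ} (ha : ‖a‖ < 1) (hζ : ‖ζ‖ ≤ 1) : 1 + (starRingEnd ℂ) a * ζ ≠ 0 := by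
  intro h
  have h1 : ‖(starRingEnd ℂ) a * ζ‖ < 1 := by
    rw [norm_mul, RCLike.norm_conj]
    nlinarith [norm_nonneg a, norm_nonneg ζ]
  have h2 : (starRingEnd ℂ) a * ζ = -1 := by linear_combination h
  rw [h2, norm_neg, norm_one] at h1
  exact lt_irrefl 1 h1

lemma normSq_lt_one {a : ℂ} (ha : ‖a‖ < 1) : Complex.normSq a < 1 := by
  have h := Complex.sq_norm a
  nlinarith [norm_nonneg a]

lemma moeb_maps {a : ℂ} (ha : a ∈ ball (0:ℂ) 1) :
    MapsTo (moeb a) (ball (0:ℂ) 1) (ball (0:ℂ) 1) := by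
  intro ζ hζ
  rw [mem_ball_zero_iff] at *
  have hden := moeb_den_ne ha hζ.le
  have hdpos : (0:ℝ) < ‖1 + (starRingEnd ℂ) a * ζ‖ := norm_pos_iff.2 hden
  show ‖(ζ + a) / (1 + (starRingEnd ℂ) a * ζ)‖ < 1
  rw [norm_div, div_lt_one hdpos]
  have hA := normSq_lt_one ha
  have hZ := normSq_lt_one hζ
  have key : Complex.normSq (ζ + a) < Complex.normSq (1 + (starRingEnd ℂ) a * ζ) := by
    simp only [Complex.normSq_apply, Complex.add_re, Complex.add_im, Complex.mul_re,
      Complex.mul_im, Complex.one_re, Complex.one_im, Complex.conj_re, Complex.conj_im] at *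
    nlinarith [mul_pos (sub_pos.2 hA) (sub_pos.2 hZ)]
  have e1 : Complex.normSq (ζ + a) = ‖ζ + a‖^2 := (Complex.sq_norm _).symm
  have e2 : Complex.normSq (1 + (starRingEnd ℂ) a * ζ) = ‖1 + (starRingEnd ℂ) a * ζ‖^2 :=
    (Complex.sq_norm _).symm
  nlinarith [norm_nonneg (ζ + a)]

lemma moeb_hasDerivAt {a p : ℂ} (h : 1 + (starRingEnd ℂ) a * p ≠ 0) :
    HasDerivAt (moeb a) ((1 - (starRingEnd ℂ) a * a) / (1 + (starRingEnd ℂ) a * p)^2) p := by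
  have h1 : HasDerivAt (fun ζ : ℂ => ζ + a) 1 p := (hasDerivAt_id p).add_const a
  have h2 : HasDerivAt (fun ζ : ℂ => 1 + (starRingEnd ℂ) a * ζ) ((starRingEnd ℂ) a) p := by
    simpa using ((hasDerivAt_id p).const_mul ((starRingEnd ℂ) a)).const_add 1
  have := h1.div h2 h
  refine this.congr_deriv ?_
  ring

lemma schwarz_pick {f : ℂ → ℂ} (hf : DifferentiableOn ℂ f (ball (0:ℂ) 1))
    (hm : MapsTo f (ball (0:ℂ) 1) (ball (0:ℂ) 1)) {τ : ℂ} (hτ : τ ∈ ball (0:ℂ) 1) :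
    ‖deriv f τ‖ * (1 - ‖τ‖^2) ≤ 1 := by
  set a := f τ with ha_def
  have ha : a ∈ ball (0:ℂ) 1 := hm hτ
  have ha1 : ‖a‖ < 1 := mem_ball_zero_iff.1 ha
  have hτ1 : ‖τ‖ < 1 := mem_ball_zero_iff.1 hτ
  have hna : a ∈ ball (0:ℂ) 1 := ha
  have hna' : -a ∈ ball (0:ℂ) 1 := by rwa [mem_ball_zero_iff, norm_neg]
  -- the composition g
  set g : ℂ → ℂ := (moeb (-a)) ∘ f ∘ (moeb τ) with hg_def
  have hmτ : MapsTo (moeb τ) (ball (0:ℂ) 1) (ball (0:ℂ) 1) := moeb_maps hτ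
  have hdτ : DifferentiableOn ℂ (moeb τ) (ball (0:ℂ) 1) := fun p hp =>
    ((moeb_hasDerivAt (moeb_den_ne hτ1 (mem_ball_zero_iff.1 hp).le)).differentiableAt).differentiableWithinAt
  have hdna : DifferentiableOn ℂ (moeb (-a)) (ball (0:ℂ) 1) := fun p hp =>
    ((moeb_hasDerivAt (moeb_den_ne (by rwa [norm_neg]) (mem_ball_zero_iff.1 hp).le)).differentiableAt).differentiableWithinAt
  have hgd : DifferentiableOn ℂ g (ball (0:ℂ) 1) :=
    (hdna.comp (hf.comp hdτ hmτ) ((hm.comp hmτ)))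
  have hgm : MapsTo g (ball (0:ℂ) 1) (ball (0:ℂ) 1) :=
    (moeb_maps hna').comp (hm.comp hmτ)
  -- g 0 = 0
  have hτ0 : moeb τ 0 = τ := by simp [moeb]
  have hg0 : g 0 = 0 := by
    have hden : 1 + (starRingEnd ℂ) (-a) * a ≠ 0 := moeb_den_ne (by rwa [norm_neg]) ha1.le
    simp only [hg_def, Function.comp_apply, hτ0, ← ha_def, moeb]
    rw [div_eq_zero_iff]
    left; rw [ha_def]; ring
  -- derivative of g at 0
  have hca : 1 - (starRingEnd ℂ) a * a ≠ 0 := by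
    have := moeb_den_ne (a := -a) (ζ := a) (by rwa [norm_neg]) ha1.le
    simpa [sub_eq_add_neg] using this
  have h1 : HasDerivAt (moeb (-a)) ((1 - (starRingEnd ℂ) a * a)⁻¹) a := by
    have := moeb_hasDerivAt (a := -a) (p := a) (by simpa [sub_eq_add_neg] using hca)
    convert this using 1
    simp only [map_neg]
    rw [eq_div_iff (by simpa [sub_eq_add_neg, neg_mul] using pow_ne_zero 2 hca)]
    field_simp
    ring
  have h2 : HasDerivAt (moeb τ) (1 - (starRingEnd ℂ) τ * τ) 0 := by
    have := moeb_hasDerivAt (a := τ) (p := 0) (by simp)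
    simpa using this
  have hfd : HasDerivAt f (deriv f τ) τ :=
    (hf.differentiableAt (isOpen_ball.mem_nhds hτ)).hasDerivAt
  have hgder : HasDerivAt g ((1 - (starRingEnd ℂ) a * a)⁻¹ * (deriv f τ * (1 - (starRingEnd ℂ) τ * τ))) 0 := by
    have hfd' : HasDerivAt f (deriv f τ) (moeb τ 0) := by rw [hτ0]; exact hfd
    have hfc : HasDerivAt (f ∘ moeb τ) (deriv f τ * (1 - (starRingEnd ℂ) τ * τ)) 0 :=
      hfd'.comp 0 h2
    have h1' : HasDerivAt (moeb (-a)) ((1 - (starRingEnd ℂ) a * a)⁻¹) ((f ∘ moeb τ) 0) := by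
      rw [show ((f ∘ moeb τ) 0) = a by simp [hτ0, ha_def]]; exact h1
    exact h1'.comp 0 hfc
  have hb := Complex.norm_deriv_le_one_of_mapsTo_ball hgd (by rw [hg0]; exact hgm.mono_right ball_subset_closedBall) one_pos
  rw [hgder.deriv] at hb
  -- norms
  have hnτ : ‖(1 : ℂ) - (starRingEnd ℂ) τ * τ‖ = 1 - ‖τ‖^2 := by
    rw [Complex.conj_mul', show (1 : ℂ) - ((‖τ‖ : ℂ))^2 = ((1 - ‖τ‖^2 : ℝ) : ℂ) by push_cast; ring]
    rw [Complex.norm_real, Real.norm_of_nonneg (by nlinarith [norm_nonneg τ, norm_nonneg a, hτ1, ha1])]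
  have hna2 : ‖(1 : ℂ) - (starRingEnd ℂ) a * a‖ = 1 - ‖a‖^2 := by
    rw [Complex.conj_mul', show (1 : ℂ) - ((‖a‖ : ℂ))^2 = ((1 - ‖a‖^2 : ℝ) : ℂ) by push_cast; ring]
    rw [Complex.norm_real, Real.norm_of_nonneg (by nlinarith [norm_nonneg τ, norm_nonneg a, hτ1, ha1])]
  have hbn : ‖((1 - (starRingEnd ℂ) a * a)⁻¹ * (deriv f τ * (1 - (starRingEnd ℂ) τ * τ)))‖ ≤ 1 := hb
  rw [norm_mul, norm_mul, norm_inv, hnτ, hna2] at hbn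
  have hpos : 0 < 1 - ‖a‖^2 := by nlinarith [norm_nonneg a]
  rw [inv_mul_le_iff₀ (by positivity)] at hbn
  nlinarith [norm_nonneg (deriv f τ), sq_nonneg ‖a‖]


/-- **Legendrian Schwarz lemma.** If `z, w : 𝔻 → 𝔻` are holomorphic self-maps of the
unit disc and `y : ℂ → ℂ` is holomorphic with `y' = z·w'` (so that `(z,w,y)` is a
Legendrian disc for the contact form `dy − z dw`), then for all `ζ ∈ 𝔻`,
`|y(ζ) − y(0)| ≤ (1/2)·log((1+|ζ|)/(1−|ζ|))`. -/
theorem legendrian_disc_bound (z w y : ℂ → ℂ)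
    (hz : DifferentiableOn ℂ z (ball (0 : ℂ) 1))
    (hzm : Set.MapsTo z (ball (0 : ℂ) 1) (ball (0 : ℂ) 1))
    (hw : DifferentiableOn ℂ w (ball (0 : ℂ) 1))
    (hwm : Set.MapsTo w (ball (0 : ℂ) 1) (ball (0 : ℂ) 1))
    (hy : DifferentiableOn ℂ y (ball (0 : ℂ) 1))
    (hleg : ∀ ζ ∈ ball (0 : ℂ) 1, deriv y ζ = z ζ * deriv w ζ) :
    ∀ ζ ∈ ball (0 : ℂ) 1,
      ‖y ζ - y 0‖ ≤ (1 / 2) * Real.log ((1 + ‖ζ‖) / (1 - ‖ζ‖)) := by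
  intro ζ hζ
  set r : ℝ := ‖ζ‖ with hr_def
  have hr0 : 0 ≤ r := norm_nonneg ζ
  have hr1 : r < 1 := mem_ball_zero_iff.1 hζ
  -- the path and map into the ball
  have hmem : ∀ t : ℝ, t ∈ Set.Icc (0:ℝ) 1 → (t : ℂ) * ζ ∈ ball (0:ℂ) 1 := by
    intro t ht
    rw [mem_ball_zero_iff, norm_mul, Complex.norm_real, Real.norm_of_nonneg ht.1]
    nlinarith [ht.1, ht.2]
  set f : ℝ → ℂ := fun t => y ((t : ℂ) * ζ) - y 0 with hf_def
  set B : ℝ → ℝ := fun t => 2⁻¹ * (Real.log (1 + t * r) - Real.log (1 - t * r)) with hB_def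
  set B' : ℝ → ℝ := fun t => r / (1 - (t * r)^2) with hB'_def
  have hyc : ContinuousOn y (ball (0:ℂ) 1) := hy.continuousOn
  have hfc : ContinuousOn f (Set.Icc 0 1) := by
    apply ContinuousOn.sub _ continuousOn_const
    exact hyc.comp (Continuous.continuousOn (by continuity)) hmem
  have hf' : ∀ t ∈ Set.Ico (0:ℝ) 1, HasDerivAt f (ζ * deriv y ((t:ℂ) * ζ)) t := by
    intro t ht
    have htm : (t : ℂ) * ζ ∈ ball (0:ℂ) 1 := hmem t ⟨ht.1, ht.2.le⟩
    have hyd : HasDerivAt y (deriv y ((t:ℂ) * ζ)) ((t:ℂ) * ζ) :=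
      (hy.differentiableAt (isOpen_ball.mem_nhds htm)).hasDerivAt
    have hin : HasDerivAt (fun s : ℝ => (s : ℂ) * ζ) ζ t := by
      simpa using (HasDerivAt.ofReal_comp (hasDerivAt_id t)).mul_const ζ
    have hcomp : HasDerivAt (y ∘ fun s : ℝ => (s : ℂ) * ζ) (ζ • deriv y ((t:ℂ) * ζ)) t :=
      HasDerivAt.scomp t hyd hin
    have := hcomp.sub_const (y 0)
    simpa [hf_def, Function.comp, smul_eq_mul, mul_comm] using this
  -- derivative of the boundary function
  have hB'' : ∀ t ∈ Set.Icc (0:ℝ) 1, HasDerivAt B (B' t) t := by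
    intro t ht
    have h1 : (0:ℝ) < 1 + t * r := by nlinarith [ht.1, ht.2]
    have h2 : (0:ℝ) < 1 - t * r := by nlinarith [ht.1, ht.2]
    have d1 : HasDerivAt (fun s : ℝ => 1 + s * r) r t := by
      simpa using ((hasDerivAt_id t).mul_const r).const_add 1
    have d2 : HasDerivAt (fun s : ℝ => 1 - s * r) (-r) t := by
      simpa using ((hasDerivAt_id t).mul_const r).const_sub 1
    have l1 : HasDerivAt (fun s : ℝ => Real.log (1 + s * r)) ((1 + t * r)⁻¹ * r) t :=
      by have := (Real.hasDerivAt_log h1.ne').comp t d1; exact this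
    have l2 : HasDerivAt (fun s : ℝ => Real.log (1 - s * r)) ((1 - t * r)⁻¹ * (-r)) t :=
      by have := (Real.hasDerivAt_log h2.ne').comp t d2; exact this
    have := (l1.sub l2).const_mul (2⁻¹ : ℝ)
    refine this.congr_deriv ?_
    have h3 : (0:ℝ) < 1 - (t * r)^2 := by nlinarith
    rw [hB'_def]
    show _ = r / (1 - (t * r)^2)
    rw [show (1:ℝ) - (t * r)^2 = (1 + t * r) * (1 - t * r) by ring]
    field_simp
    ring
  have hBc : ContinuousOn B (Set.Icc 0 1) :=
    fun t ht => (hB'' t ht).continuousAt.continuousWithinAt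
  have hB0 : ‖f 0‖ ≤ B 0 := by simp [hf_def, hB_def]
  have bound : ∀ t ∈ Set.Ico (0:ℝ) 1, ‖ζ * deriv y ((t:ℂ) * ζ)‖ ≤ B' t := by
    intro t ht
    have htm : (t : ℂ) * ζ ∈ ball (0:ℂ) 1 := hmem t ⟨ht.1, ht.2.le⟩
    have hnt : ‖(t:ℂ) * ζ‖ = t * r := by
      rw [norm_mul, Complex.norm_real, Real.norm_of_nonneg ht.1]
    have hsp := schwarz_pick hw hwm htm
    have hz1 : ‖z ((t:ℂ) * ζ)‖ < 1 := mem_ball_zero_iff.1 (hzm htm)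
    have hs1 : t * r < 1 := by nlinarith [ht.1, ht.2, hr0, hr1]
    have hs0 : 0 ≤ t * r := mul_nonneg ht.1 hr0
    have hpos : (0:ℝ) < 1 - (t * r)^2 := by nlinarith
    rw [norm_mul, hleg _ htm, norm_mul]
    rw [hnt] at hsp
    have hwb : ‖deriv w ((t:ℂ) * ζ)‖ ≤ 1 / (1 - (t * r)^2) := by
      rw [le_div_iff₀ hpos]; linarith
    calc r * (‖z ((t:ℂ) * ζ)‖ * ‖deriv w ((t:ℂ) * ζ)‖)
        ≤ r * (1 * (1 / (1 - (t * r)^2))) := by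
          apply mul_le_mul_of_nonneg_left _ hr0
          exact mul_le_mul hz1.le hwb (norm_nonneg _) zero_le_one
      _ = B' t := by rw [hB'_def]; ring
  have key := image_norm_le_of_norm_deriv_right_le_deriv_boundary' hfc
    (fun t ht => (hf' t ht).hasDerivWithinAt) hB0 hBc
    (fun t ht => (hB'' t ⟨ht.1, ht.2.le⟩).hasDerivWithinAt) bound
    (right_mem_Icc.2 zero_le_one)
  have hO : (1:ℝ) + 1 * r > 0 := by linarith
  have hO' : (1:ℝ) - 1 * r > 0 := by linarith
  calc ‖y ζ - y 0‖ = ‖f 1‖ := by simp [hf_def]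
    _ ≤ B 1 := key
    _ = (1 / 2) * Real.log ((1 + r) / (1 - r)) := by
        rw [hB_def]
        simp only [one_mul]
        rw [Real.log_div (by linarith) (by linarith)]
        ring
end

section
/- Let M be a connected, locally compact Hausdorff topological space and let k be a metric on M which is continuous as a function M × M → [0,∞) with respect to the given topology. Suppose that for all p, q ∈ M and every ε > 0 there exists a continuous curve γ : [0,1] → M with γ(0) = p, γ(1) = q, such that k(p, γ(t)) ≤ k(p,q) + ε for every t ∈ [0,1]. Then the topology induced by the metric k coincides with the given topology of M. -/
/-- **A continuous metric with an approximate geodesic property induces the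
topology.** Let `M` be a connected, locally compact Hausdorff space and `k` a metric
on `M` (symmetric, triangle inequality, vanishing exactly on the diagonal) which is
continuous on `M × M`.  Suppose that for all `p, q` and `ε > 0` there is a continuous
curve `γ : [0,1] → M` from `p` to `q` with `k(p, γ(t)) ≤ k(p,q) + ε` for all `t`.
Then the `k`-topology coincides with the given topology on `M`. -/
theorem metric_topology_eq_of_curves {M : Type*} [TopologicalSpace M]
    [ConnectedSpace M] [LocallyCompactSpace M] [T2Space M]
    (k : M → M → ℝ)
    (hsymm : ∀ p q, k p q = k q p)
    (htri : ∀ p q r, k p r ≤ k p q + k q r)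
    (hzero : ∀ p q, k p q = 0 ↔ p = q)
    (hcont : Continuous fun pq : M × M => k pq.1 pq.2)
    (hcurve : ∀ p q : M, ∀ ε > (0 : ℝ), ∃ γ : ℝ → M,
      ContinuousOn γ (Set.Icc 0 1) ∧ γ 0 = p ∧ γ 1 = q ∧
      ∀ t ∈ Set.Icc (0 : ℝ) 1, k p (γ t) ≤ k p q + ε) :
    ∀ s : Set M, IsOpen s ↔ ∀ p ∈ s, ∃ ε > (0 : ℝ), {q | k p q < ε} ⊆ s := by
  have knonneg : ∀ p q, 0 ≤ k p q := by
    intro p q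
    have h0 : k p p = 0 := (hzero p p).mpr rfl
    have := htri p q p
    rw [h0, hsymm q p] at this
    linarith
  have hkp : ∀ p : M, Continuous (fun q => k p q) := fun p =>
    hcont.comp (Continuous.prodMk_right p)
  intro s
  constructor
  · -- open → contains k-balls
    intro hs p hp
    obtain ⟨K, hKcomp, hpint, hKs⟩ := exists_compact_subset hs hp
    set U := interior K with hUdef
    have hUopen : IsOpen U := isOpen_interior
    have hUK : U ⊆ K := interior_subset
    have hUs : U ⊆ s := hUK.trans hKs
    have hclUK : closure U ⊆ K := closure_minimal hUK hKcomp.isClosed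
    have hFsub : frontier U ⊆ K := fun x hx => hclUK hx.1
    have hFcomp : IsCompact (frontier U) :=
      hKcomp.of_isClosed_subset isClosed_frontier hFsub
    by_cases hF : (frontier U).Nonempty
    · obtain ⟨x₀, hx₀F, hx₀min⟩ := hFcomp.exists_isMinOn hF (hkp p).continuousOn
      set ε₀ := k p x₀ with hε₀def
      have hx₀U : x₀ ∉ U := fun h => hx₀F.2 (by rwa [hUopen.interior_eq])
      have hx₀ne : x₀ ≠ p := fun h => hx₀U (h ▸ hpint)
      have hε₀pos : 0 < ε₀ := by
        rcases lt_or_eq_of_le (knonneg p x₀) with h | h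
        · exact h
        · exact absurd ((hzero p x₀).mp h.symm).symm hx₀ne
      refine ⟨ε₀ / 2, by linarith, ?_⟩
      intro q hq
      simp only [Set.mem_setOf_eq] at hq
      -- show q ∈ U ⊆ s
      obtain ⟨γ, hγcont, hγ0, hγ1, hγk⟩ := hcurve p q (ε₀ / 2) (by linarith)
      by_contra hqs
      have hqU : q ∉ U := fun h => hqs (hUs h)
      -- first exit time
      set A := Set.Icc (0 : ℝ) 1 ∩ γ ⁻¹' Uᶜ with hAdef
      have hAclosed : IsClosed A :=
        hγcont.preimage_isClosed_of_isClosed isClosed_Icc hUopen.isClosed_compl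
      have hAne : A.Nonempty := ⟨1, ⟨by norm_num, by norm_num⟩, by simpa [hγ1] using hqU⟩
      have hAbdd : BddBelow A := ⟨0, fun t ht => ht.1.1⟩
      set t₀ := sInf A with ht₀def
      have ht₀A : t₀ ∈ A := hAclosed.csInf_mem hAne hAbdd
      have ht₀mem : t₀ ∈ Set.Icc (0 : ℝ) 1 := ht₀A.1
      have hγt₀U : γ t₀ ∉ U := ht₀A.2
      have ht₀pos : 0 < t₀ := by
        rcases lt_or_eq_of_le ht₀mem.1 with h | h
        · exact h
        · exfalso; apply hγt₀U; rw [← h, hγ0]; exact hpint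
      have hbefore : ∀ t ∈ Set.Ico (0 : ℝ) t₀, γ t ∈ U := by
        intro t ht
        by_contra h
        have : t ∈ A := ⟨⟨ht.1, ht.2.le.trans ht₀mem.2⟩, h⟩
        exact absurd (csInf_le hAbdd this) (not_le.mpr ht.2)
      -- γ t₀ ∈ closure U
      have hcl : γ t₀ ∈ closure U := by
        have hsub : Set.Ico (0 : ℝ) t₀ ⊆ Set.Icc 0 1 := fun t ht =>
          ⟨ht.1, ht.2.le.trans ht₀mem.2⟩
        have hcwa : ContinuousWithinAt γ (Set.Ico (0 : ℝ) t₀) t₀ :=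
          (hγcont t₀ ht₀mem).mono hsub
        have heq : nhdsWithin t₀ (Set.Ico (0 : ℝ) t₀) = nhdsWithin t₀ (Set.Iio t₀) :=
          nhdsWithin_Ico_eq_nhdsLT ht₀pos
        have hne : (nhdsWithin t₀ (Set.Ico (0 : ℝ) t₀)).NeBot := by
          rw [heq]; infer_instance
        refine mem_closure_of_tendsto hcwa ?_
        filter_upwards [self_mem_nhdsWithin] with t ht using hbefore t ht
      have hfront : γ t₀ ∈ frontier U := ⟨hcl, fun h => hγt₀U (by rwa [hUopen.interior_eq] at h)⟩
      have h1 : ε₀ ≤ k p (γ t₀) := hx₀min hfront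
      have h2 : k p (γ t₀) ≤ k p q + ε₀ / 2 := hγk t₀ ht₀mem
      linarith
    · -- empty frontier: U clopen, so U = univ and s = univ
      have hclosed : IsClosed U := by
        rw [← closure_eq_iff_isClosed]
        have := closure_eq_self_union_frontier U
        rw [Set.not_nonempty_iff_eq_empty.mp hF] at this
        simpa using this
      have hUuniv : U = Set.univ :=
        IsClopen.eq_univ ⟨hclosed, hUopen⟩ ⟨p, hpint⟩
      have : s = Set.univ := Set.eq_univ_of_univ_subset (hUuniv ▸ hUs)
      exact ⟨1, by norm_num, by simp [this]⟩
  · -- k-balls are open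
    intro h
    rw [isOpen_iff_forall_mem_open]
    intro p hp
    obtain ⟨ε, hε, hball⟩ := h p hp
    refine ⟨{q | k p q < ε}, hball, ?_, ?_⟩
    · exact isOpen_lt (hkp p) continuous_const
    · simpa [Set.mem_setOf_eq, (hzero p p).mpr rfl] using hε
end
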